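/- arXiv:1612.08161 — 2 statements merged into one kernel-verified Lean document; each statement's English description precedes it below -/
import Mathlib

section
/- Let M be a real Hilbert space, M₂ ⊆ M a nonzero finite-dimensional subspace, M₁ = M₂^⊥ its orthogonal complement, and P₂ : M → M₂ the orthogonal projection. Let ϑ > 0 and let B : M → M be a bounded invertible linear operator such that B₀ := P₂ ∘ B restricted to M₂ is an invertible linear operator of M₂ with ‖B₀⁻¹‖ < ϑ. Let u₀ ∈ M₂ with ‖u₀‖ = 1, S = {m₁ + u₀ : m₁ ∈ M₁}, Q = {v ∈ M₂ : ‖v‖ ≤ ϑ} and ∂Q = {v ∈ M₂ : ‖v‖ = ϑ}. Then B(∂Q) ∩ S = ∅, and for every continuous map φ : B(Q) → M with φ(x) = x for all x ∈ B(∂Q), the image φ(B(Q)) intersects S, i.e., φ(B(Q)) ∩ S ≠ ∅. (In the terminology of the paper, B(∂Q) and S homotopically link; this is the main content of Lemma 2.3.) -/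
/-!
On `M₂`, the map `w ↦ B₀⁻¹ (P₂ (φ (B w)))` is continuous on the ball `‖w‖ ≤ ϑ` and is the identity
on its boundary sphere, so by Brouwer's theorem its image contains the whole open ball, in
particular `B₀⁻¹ u₀`, whose norm is at most `‖B₀⁻¹‖ < ϑ`; and `P₂ x = u₀` exactly when `x ∈ S`.
The same norm bound shows that `B(∂Q)` misses `S`.

Brouwer's theorem is proved along Milnor's analytic route. If a `C¹` map `F` from a neighbourhood
of a ball to its boundary sphere fixed the sphere, then `t ↦ ∫ det D(id + t (F - id))` over the ball
would be a polynomial that equals the volume of the ball for small `t` (the map is then a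
diffeomorphism of the ball onto itself), yet vanishes at `t = 1`, where `DF` is singular because
`‖F‖` is constant. Ray retractions and smoothing by convolution pass from this to continuous maps.
-/

open Metric Set Function MeasureTheory Polynomial Filter Topology
open scoped NNReal RealInnerProductSpace

section SphereExit

variable {E : Type*} [NormedAddCommGroup E] [InnerProductSpace ℝ E]

/-- The larger root `σ` of `‖y + σ • e‖ ^ 2 = r ^ 2`, i.e. where the ray from `y` in direction `e`
leaves the sphere of radius `r`. -/
noncomputable def sphereExitParam (r : ℝ) (y e : E) : ℝ :=
  (-⟪y, e⟫ + √(⟪y, e⟫ ^ 2 + (r ^ 2 - ‖y‖ ^ 2) * ‖e‖ ^ 2)) / ‖e‖ ^ 2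

variable {r : ℝ} {y e : E}

theorem norm_add_sphereExitParam_smul (hr : 0 ≤ r) (he : e ≠ 0)
    (hd : 0 ≤ ⟪y, e⟫ ^ 2 + (r ^ 2 - ‖y‖ ^ 2) * ‖e‖ ^ 2) :
    ‖y + sphereExitParam r y e • e‖ = r := by
  have ha : 0 < ‖e‖ ^ 2 := by positivity
  have hroot : ‖e‖ ^ 2 * sphereExitParam r y e ^ 2 + 2 * ⟪y, e⟫ * sphereExitParam r y e
      + ‖y‖ ^ 2 - r ^ 2 = 0 := by
    have hs := Real.sq_sqrt hd
    rw [sphereExitParam]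
    generalize √(⟪y, e⟫ ^ 2 + (r ^ 2 - ‖y‖ ^ 2) * ‖e‖ ^ 2) = q at hs ⊢
    field_simp
    linear_combination hs
  have hsq : ‖y + sphereExitParam r y e • e‖ ^ 2 = r ^ 2 := by
    rw [norm_add_sq_real, real_inner_smul_right, norm_smul, mul_pow, Real.norm_eq_abs, sq_abs]
    linarith
  exact (sq_eq_sq₀ (norm_nonneg _) hr).1 hsq

theorem sphereExitParam_eq_zero (hy : ‖y‖ = r) (hb : 0 ≤ ⟪y, e⟫) : sphereExitParam r y e = 0 := by
  simp [sphereExitParam, hy, Real.sqrt_sq hb]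

theorem sphereExitParam_eq_one (he : e ≠ 0) (hy : ‖y‖ ≤ r) (hye : ‖y + e‖ = r) :
    sphereExitParam r y e = 1 := by
  have ha : 0 < ‖e‖ ^ 2 := by positivity
  have hq : ‖y‖ ^ 2 + 2 * ⟪y, e⟫ + ‖e‖ ^ 2 = r ^ 2 := by rw [← hye, norm_add_sq_real]
  have hab : 0 ≤ ‖e‖ ^ 2 + ⟪y, e⟫ := by nlinarith [norm_nonneg y]
  have hd : ⟪y, e⟫ ^ 2 + (r ^ 2 - ‖y‖ ^ 2) * ‖e‖ ^ 2 = (‖e‖ ^ 2 + ⟪y, e⟫) ^ 2 := by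
    rw [← hq]; ring
  rw [sphereExitParam, hd, Real.sqrt_sq hab]
  field_simp
  ring

variable {X : Type*} [TopologicalSpace X] {s : Set X} {y e : X → E}

theorem ContinuousOn.sphereExitParam (hy : ContinuousOn y s) (he : ContinuousOn e s)
    (he₀ : ∀ x ∈ s, e x ≠ 0) : ContinuousOn (fun x => sphereExitParam r (y x) (e x)) s := by
  unfold _root_.sphereExitParam
  refine ContinuousOn.div (by fun_prop) (by fun_prop) fun x hx => ?_
  simpa using he₀ x hx

theorem ContDiffOn.sphereExitParam {F : Type*} [NormedAddCommGroup F] [NormedSpace ℝ F]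
    {y e : F → E} {s : Set F} {n : WithTop ℕ∞} (hy : ContDiffOn ℝ n y s) (he : ContDiffOn ℝ n e s)
    (he₀ : ∀ x ∈ s, e x ≠ 0)
    (hd : ∀ x ∈ s, 0 < ⟪y x, e x⟫ ^ 2 + (r ^ 2 - ‖y x‖ ^ 2) * ‖e x‖ ^ 2) :
    ContDiffOn ℝ n (fun x => sphereExitParam r (y x) (e x)) s := by
  have hb : ContDiffOn ℝ n (fun x => ⟪y x, e x⟫) s := hy.inner ℝ he
  have hny : ContDiffOn ℝ n (fun x => ‖y x‖ ^ 2) s := (contDiff_norm_sq ℝ).comp_contDiffOn hy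
  have hne : ContDiffOn ℝ n (fun x => ‖e x‖ ^ 2) s := (contDiff_norm_sq ℝ).comp_contDiffOn he
  have hsqrt := ((hb.pow 2).add ((contDiffOn_const.sub hny).mul hne)).sqrt fun x hx => (hd x hx).ne'
  exact (hb.neg.add hsqrt).div hne fun x hx => by simpa using he₀ x hx

end SphereExit

theorem real_inner_sub_pos_of_norm_le {E : Type*} [NormedAddCommGroup E] [InnerProductSpace ℝ E]
    {x y : E} (hyx : ‖y‖ ≤ ‖x‖) (hne : y ≠ x) : 0 < ⟪x, x - y⟫ := by
  have h : 2 * ⟪x, x - y⟫ = ‖x‖ ^ 2 - ‖y‖ ^ 2 + ‖x - y‖ ^ 2 := by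
    rw [norm_sub_sq_real, inner_sub_right, real_inner_self_eq_norm_sq]; ring
  have : 0 < ‖x - y‖ := norm_pos_iff.2 (sub_ne_zero.2 hne.symm)
  nlinarith [norm_nonneg y]

theorem Matrix.det_one_add_smul_eq_sum {ι R : Type*} [Fintype ι] [DecidableEq ι] [CommRing R]
    (t : R) (M : Matrix ι ι R) :
    (1 + t • M).det = ∑ s : Finset ι, t ^ s.card *
      (Matrix.of fun i j => if i ∈ s then M i j else (1 : Matrix ι ι R) i j).det := by
  have hrows : (1 + t • M : Matrix ι ι R) = Matrix.of ((t • M : ι → ι → R) + (1 : Matrix ι ι R)) :=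
    add_comm _ _
  rw [hrows, Matrix.det]
  refine (Matrix.detRowAlternating.toMultilinearMap.map_add_univ _ _).trans
    (Finset.sum_congr rfl fun s _ => ?_)
  let N : ι → ι → R := fun i j => if i ∈ s then M i j else (1 : Matrix ι ι R) i j
  have hpw : s.piecewise (t • M : ι → ι → R) (1 : Matrix ι ι R)
      = s.piecewise (fun i => t • N i) N := by
    ext i j
    by_cases hi : i ∈ s <;> simp [Finset.piecewise, hi, N]
  rw [hpw, MultilinearMap.map_piecewise_smul, Finset.prod_const, smul_eq_mul]
  rfl

theorem exists_polynomial_eval_eq_integral_det_one_add_smul {ι α : Type*} [Fintype ι]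
    [DecidableEq ι] [TopologicalSpace α] [T2Space α] [MeasurableSpace α] [OpensMeasurableSpace α]
    (μ : Measure α) [IsFiniteMeasureOnCompacts μ] {K : Set α} {M : α → Matrix ι ι ℝ}
    (hK : IsCompact K) (hM : ContinuousOn M K) :
    ∃ P : ℝ[X], ∀ t : ℝ, P.eval t = ∫ x in K, (1 + t • M x).det ∂μ := by
  have hcoeff : ∀ s : Finset ι, ContinuousOn
      (fun x => (Matrix.of fun i j => if i ∈ s then M x i j else (1 : Matrix ι ι ℝ) i j).det) K :=
    fun s => continuous_id.matrix_det.comp_continuousOn <| continuousOn_pi.2 fun i =>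
      continuousOn_pi.2 fun j => by
        by_cases hi : i ∈ s
        · simp only [Matrix.of_apply, hi, if_true]
          exact (continuous_apply_apply i j).comp_continuousOn hM
        · simp only [Matrix.of_apply, hi, if_false]
          exact continuousOn_const
  refine ⟨∑ s : Finset ι, C (∫ x in K, (Matrix.of fun i j =>
    if i ∈ s then M x i j else (1 : Matrix ι ι ℝ) i j).det ∂μ) * X ^ s.card, fun t => ?_⟩
  rw [integral_congr_ae (ae_of_all _ fun x => Matrix.det_one_add_smul_eq_sum t (M x)),
    integral_finsetSum _ fun s _ => ((hcoeff s).integrableOn_compact hK).const_mul _]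
  simp only [eval_finsetSum, eval_mul, eval_C, eval_pow, eval_X, integral_const_mul]
  exact Finset.sum_congr rfl fun s _ => mul_comm _ _

theorem ContinuousLinearMap.exists_polynomial_eval_eq_integral_det_id_add_smul {E α : Type*}
    [NormedAddCommGroup E] [NormedSpace ℝ E] [FiniteDimensional ℝ E] [TopologicalSpace α]
    [T2Space α] [MeasurableSpace α] [OpensMeasurableSpace α] (μ : Measure α)
    [IsFiniteMeasureOnCompacts μ] {K : Set α} {A : α → E →L[ℝ] E} (hK : IsCompact K)
    (hA : ContinuousOn A K) :
    ∃ P : ℝ[X], ∀ t : ℝ, P.eval t = ∫ x in K, (ContinuousLinearMap.id ℝ E + t • A x).det ∂μ := by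
  let b := Module.finBasis ℝ E
  let toMatrix : (E →L[ℝ] E) →ₗ[ℝ] Matrix _ _ ℝ :=
    (LinearMap.toMatrix b b).toLinearMap ∘ₗ ContinuousLinearMap.coeLM ℝ
  obtain ⟨P, hP⟩ := exists_polynomial_eval_eq_integral_det_one_add_smul μ hK
    (toMatrix.continuous_of_finiteDimensional.comp_continuousOn hA)
  refine ⟨P, fun t => (hP t).trans (integral_congr_ae (ae_of_all _ fun x => ?_))⟩
  simp [toMatrix, ContinuousLinearMap.det, ← LinearMap.det_toMatrix b]

theorem ContinuousLinearMap.det_id_add_pos {E : Type*} [NormedAddCommGroup E] [NormedSpace ℝ E]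
    [FiniteDimensional ℝ E] {A : E →L[ℝ] E} (hA : ‖A‖ < 1) :
    0 < (ContinuousLinearMap.id ℝ E + A).det := by
  let d : ℝ → ℝ := fun s => (ContinuousLinearMap.id ℝ E + s • A).det
  have hd : Continuous d := ContinuousLinearMap.continuous_det.comp (by fun_prop)
  have hd₀ : ∀ s ∈ Icc (0 : ℝ) 1, d s ≠ 0 := fun s hs => by
    have hsA : ‖-(s • A)‖ < 1 := by
      rw [norm_neg, norm_smul, Real.norm_eq_abs, abs_of_nonneg hs.1]
      nlinarith [hs.2, norm_nonneg A]
    have hunit : IsUnit (ContinuousLinearMap.id ℝ E + s • A) := by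
      have h1 : (1 : E →L[ℝ] E) - -(s • A) = ContinuousLinearMap.id ℝ E + s • A := by
        rw [sub_neg_eq_add]; rfl
      exact h1 ▸ (Units.oneSub _ hsA).isUnit
    exact ((hunit.map ContinuousLinearMap.toLinearMapRingHom).map LinearMap.det).ne_zero
  by_contra! h
  obtain ⟨s, hs, hds⟩ := intermediate_value_Icc' zero_le_one hd.continuousOn
    ⟨by simpa [d] using h, by simp [d, ContinuousLinearMap.det]⟩
  exact hd₀ s hs hds

theorem det_fderiv_eq_zero_of_eventually_norm_eq {E : Type*} [NormedAddCommGroup E]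
    [InnerProductSpace ℝ E] [FiniteDimensional ℝ E] {F : E → E} {x : E} {r : ℝ} (hr : r ≠ 0)
    (hF : DifferentiableAt ℝ F x) (hnorm : ∀ᶠ y in 𝓝 x, ‖F y‖ = r) :
    (fderiv ℝ F x).det = 0 := by
  have horth : ∀ v, ⟪F x, fderiv ℝ F x v⟫ = 0 := fun v => by
    have hconst : HasFDerivAt (fun y => ‖F y‖ ^ 2) (0 : E →L[ℝ] ℝ) x :=
      (hasFDerivAt_const (r ^ 2) x).congr_of_eventuallyEq
        (hnorm.mono fun y hy => congrArg (· ^ 2) hy)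
    have h := congrArg (fun L : E →L[ℝ] ℝ => L v) (hF.hasFDerivAt.norm_sq.unique hconst)
    simpa using h
  by_contra hdet
  have hsurj : Surjective (fderiv ℝ F x) :=
    ((Module.End.isUnit_iff _).1 ((LinearMap.isUnit_iff_isUnit_det _).2 (Ne.isUnit hdet))).2
  obtain ⟨v, hv⟩ := hsurj (F x)
  have h0 := horth v
  rw [hv, real_inner_self_eq_norm_sq, hnorm.self_of_nhds] at h0
  exact hr (pow_eq_zero_iff two_ne_zero |>.1 h0)

section PerturbationOfIdentity

variable {E : Type*} [NormedAddCommGroup E] [NormedSpace ℝ E] {f V : E → E} {s : Set E} {c : ℝ≥0}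

theorem LipschitzOnWith.approximatesLinearOn_id_add_smul (hV : LipschitzOnWith c V s) (t : ℝ) :
    ApproximatesLinearOn (fun x => x + t • V x) (ContinuousLinearMap.id ℝ E) s (‖t‖₊ * c) := by
  intro x hx y hy
  have h : x + t • V x - (y + t • V y) - (x - y) = t • (V x - V y) := by module
  simp only [ContinuousLinearMap.id_apply, h, norm_smul, NNReal.coe_mul, coe_nnnorm, mul_assoc]
  exact mul_le_mul_of_nonneg_left (hV.norm_sub_le hx hy) (norm_nonneg t)

theorem subsingleton_or_lt_nnnorm_refl_symm_inv (hc : c < 1) :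
    Subsingleton E ∨ c < ‖((ContinuousLinearEquiv.refl ℝ E).symm : E →L[ℝ] E)‖₊⁻¹ := by
  rcases subsingleton_or_nontrivial E with h | h
  · exact .inl h
  · right
    simpa using hc

theorem ApproximatesLinearOn.injOn_of_id (hf : ApproximatesLinearOn f (.id ℝ E) s c)
    (hc : c < 1) : InjOn f s :=
  ApproximatesLinearOn.injOn (f' := .refl ℝ E) hf (subsingleton_or_lt_nnnorm_refl_symm_inv hc)

theorem ApproximatesLinearOn.isOpen_image_of_id [CompleteSpace E]
    (hf : ApproximatesLinearOn f (.id ℝ E) s c) (hc : c < 1) (hs : IsOpen s) :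
    IsOpen (f '' s) :=
  (ApproximatesLinearOn.toOpenPartialHomeomorph (f' := .refl ℝ E) f s hf
    (subsingleton_or_lt_nnnorm_refl_symm_inv hc) hs).open_target

end PerturbationOfIdentity

theorem image_closedBall_eq_of_isOpen_image_ball {E : Type*} [NormedAddCommGroup E]
    [NormedSpace ℝ E] [ProperSpace E] {f : E → E} {r : ℝ} (hr : 0 < r)
    (hf : ContinuousOn f (closedBall 0 r)) (hopen : IsOpen (f '' ball 0 r))
    (hmaps : MapsTo f (closedBall 0 r) (closedBall 0 r)) (hfs : EqOn f id (sphere 0 r)) :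
    f '' closedBall 0 r = closedBall 0 r := by
  have hclosed : IsClosed (f '' closedBall 0 r) :=
    ((isCompact_closedBall 0 r).image_of_continuousOn hf).isClosed
  have hball : f '' ball 0 r ⊆ ball 0 r := by
    simpa only [interior_closedBall (0 : E) hr.ne'] using
      interior_maximal ((image_mono ball_subset_closedBall).trans hmaps.image_subset) hopen
  have hsub : ball (0 : E) r ⊆ f '' ball 0 r := by
    refine (convex_ball 0 r).isPreconnected.subset_of_closure_inter_subset hopen ?_ ?_
    · have h₀ := mem_image_of_mem f (mem_ball_self (x := (0 : E)) hr)
      exact ⟨f 0, hball h₀, h₀⟩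
    · rintro z ⟨hz, hzb⟩
      obtain ⟨x, hx, rfl⟩ := closure_minimal (image_mono ball_subset_closedBall) hclosed hz
      rcases eq_or_lt_of_le (mem_closedBall_zero_iff.1 hx) with hxr | hxr
      · rw [hfs (mem_sphere_zero_iff_norm.2 hxr), id, mem_ball_zero_iff, hxr] at hzb
        exact absurd hzb (lt_irrefl r)
      · exact mem_image_of_mem f (mem_ball_zero_iff.2 hxr)
  refine hmaps.image_subset.antisymm ?_
  simpa only [closure_ball (0 : E) hr.ne'] using
    closure_minimal (hsub.trans (image_mono ball_subset_closedBall)) hclosed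

theorem integral_det_eq_measureReal_image {E : Type*} [NormedAddCommGroup E] [NormedSpace ℝ E]
    [FiniteDimensional ℝ E] [MeasurableSpace E] [BorelSpace E] (μ : Measure E)
    [μ.IsAddHaarMeasure] {s : Set E} {f : E → E} {f' : E → E →L[ℝ] E} (hs : MeasurableSet s)
    (hf' : ∀ x ∈ s, HasFDerivWithinAt f (f' x) s x) (hf : InjOn f s)
    (hdet : ∀ x ∈ s, 0 ≤ (f' x).det) :
    ∫ x in s, (f' x).det ∂μ = μ.real (f '' s) := by
  have h := integral_image_eq_integral_abs_det_fderiv_smul μ hs hf' hf fun _ => (1 : ℝ)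
  rw [setIntegral_const, smul_eq_mul, mul_one] at h
  rw [h]
  exact setIntegral_congr_fun hs fun x hx => by simp [abs_of_nonneg (hdet x hx)]

theorem setIntegral_det_id_add_smul_eq_measureReal_closedBall {E : Type*} [NormedAddCommGroup E]
    [NormedSpace ℝ E] [FiniteDimensional ℝ E] [MeasurableSpace E] [BorelSpace E] (μ : Measure E)
    [μ.IsAddHaarMeasure] {F : E → E} {F' : E → E →L[ℝ] E} {r C t : ℝ} (hr : 0 < r)
    (hF' : ∀ x ∈ closedBall 0 r, HasFDerivAt F (F' x) x)
    (hC : ∀ x ∈ closedBall 0 r, ‖F' x - .id ℝ E‖ ≤ C)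
    (hmaps : MapsTo F (closedBall 0 r) (closedBall 0 r)) (hFs : EqOn F id (sphere 0 r))
    (ht₀ : 0 < t) (ht₁ : t ≤ 1) (htC : t * C < 1) :
    ∫ x in closedBall 0 r, (.id ℝ E + t • (F' x - .id ℝ E)).det ∂μ = μ.real (closedBall 0 r) := by
  have hC₀ : 0 ≤ C := (norm_nonneg _).trans (hC 0 (mem_closedBall_self hr.le))
  have hV : LipschitzOnWith C.toNNReal (fun x => F x - x) (closedBall 0 r) :=
    (convex_closedBall 0 r).lipschitzOnWith_of_nnnorm_hasFDerivWithin_le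
      (fun x hx => ((hF' x hx).sub (hasFDerivAt_id x)).hasFDerivWithinAt)
      fun x hx => by rw [← NNReal.coe_le_coe, coe_nnnorm, Real.coe_toNNReal _ hC₀]; exact hC x hx
  set G : E → E := fun x => x + t • (F x - x)
  have hG := hV.approximatesLinearOn_id_add_smul t
  have hc : ‖t‖₊ * C.toNNReal < 1 := by
    rw [← NNReal.coe_lt_coe]
    simpa [abs_of_pos ht₀, hC₀] using htC
  have hG' : ∀ x ∈ closedBall 0 r,
      HasFDerivWithinAt G (.id ℝ E + t • (F' x - .id ℝ E)) (closedBall 0 r) x := fun x hx =>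
    ((hasFDerivAt_id x).add (((hF' x hx).sub (hasFDerivAt_id x)).const_smul t)).hasFDerivWithinAt
  have hdet : ∀ x ∈ closedBall 0 r, 0 ≤ (.id ℝ E + t • (F' x - .id ℝ E)).det := fun x hx =>
    (ContinuousLinearMap.det_id_add_pos <| by
      rw [norm_smul, Real.norm_eq_abs, abs_of_pos ht₀]
      nlinarith [hC x hx]).le
  have hGmaps : MapsTo G (closedBall 0 r) (closedBall 0 r) := fun x hx =>
    (convex_closedBall 0 r).add_smul_sub_mem hx (hmaps hx) ⟨ht₀.le, ht₁⟩
  have hGs : EqOn G id (sphere 0 r) := fun x hx => by simp [G, hFs hx]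
  rw [integral_det_eq_measureReal_image μ measurableSet_closedBall hG' (hG.injOn_of_id hc) hdet,
    image_closedBall_eq_of_isOpen_image_ball hr hG.continuousOn
      ((hG.mono_set ball_subset_closedBall).isOpen_image_of_id hc isOpen_ball) hGmaps hGs]

theorem not_contDiffOn_of_mapsTo_sphere_of_eqOn {E : Type*} [NormedAddCommGroup E]
    [InnerProductSpace ℝ E] [FiniteDimensional ℝ E] {F : E → E} {U : Set E} {r : ℝ} (hr : 0 < r)
    (hU : IsOpen U) (hDU : closedBall 0 r ⊆ U) (hFU : MapsTo F U (sphere 0 r))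
    (hFs : EqOn F id (sphere 0 r)) : ¬ ContDiffOn ℝ 1 F U := by
  intro hF
  borelize E
  let μ : Measure E := Measure.addHaar
  have hFd : ∀ x ∈ U, HasFDerivAt F (fderiv ℝ F x) x := fun x hx =>
    ((hF.differentiableOn one_ne_zero).differentiableAt (hU.mem_nhds hx)).hasFDerivAt
  set A : E → E →L[ℝ] E := fun x => fderiv ℝ F x - .id ℝ E
  have hA : ContinuousOn A (closedBall 0 r) :=
    ((hF.continuousOn_fderiv_of_isOpen hU le_rfl).sub continuousOn_const).mono hDU
  obtain ⟨C, hC⟩ := (isCompact_closedBall (0 : E) r).exists_bound_of_continuousOn hA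
  have hC₀ : 0 ≤ C := (norm_nonneg _).trans (hC 0 (mem_closedBall_self hr.le))
  obtain ⟨P, hP⟩ := ContinuousLinearMap.exists_polynomial_eval_eq_integral_det_id_add_smul μ
    (isCompact_closedBall 0 r) hA
  -- `F` is sphere-valued, so its Jacobian vanishes
  have hP₁ : P.eval 1 = 0 := by
    rw [hP, ← integral_zero E ℝ]
    refine setIntegral_congr_fun measurableSet_closedBall fun x hx => ?_
    rw [one_smul, add_sub_cancel]
    exact det_fderiv_eq_zero_of_eventually_norm_eq hr.ne' (hFd x (hDU hx)).differentiableAt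
      (eventually_of_mem (hU.mem_nhds (hDU hx)) fun y hy => mem_sphere_zero_iff_norm.1 (hFU hy))
  have hPt : ∀ t ∈ Ioo 0 (C + 1)⁻¹, P.eval t = μ.real (closedBall 0 r) := by
    rintro t ⟨ht₀, ht⟩
    have htC : t * (C + 1) < 1 := by
      have := mul_lt_mul_of_pos_right ht (by linarith : 0 < C + 1)
      rwa [inv_mul_cancel₀ (by linarith)] at this
    rw [hP]
    exact setIntegral_det_id_add_smul_eq_measureReal_closedBall μ hr (fun x hx => hFd x (hDU hx))
      hC (fun x hx => sphere_subset_closedBall (hFU (hDU hx))) hFs ht₀ (by nlinarith) (by nlinarith)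
  have hPconst : P = Polynomial.C (μ.real (closedBall 0 r)) :=
    Polynomial.eq_of_infinite_eval_eq _ _ <|
      (Ioo_infinite (inv_pos.2 (by linarith : (0 : ℝ) < C + 1))).mono fun t ht => by
        simpa using hPt t ht
  rw [hPconst, eval_C] at hP₁
  exact (ENNReal.toReal_pos (measure_closedBall_pos μ 0 hr).ne'
    measure_closedBall_lt_top.ne).ne' hP₁

theorem exists_contDiff_norm_sub_le {E F : Type*} [NormedAddCommGroup E] [NormedSpace ℝ E]
    [FiniteDimensional ℝ E] [NormedAddCommGroup F] [NormedSpace ℝ F] [CompleteSpace F]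
    {u : E → F} (hu : Continuous u) {K : Set E} (hK : IsCompact K) {ε : ℝ} (hε : 0 < ε) :
    ∃ h : E → F, ContDiff ℝ 1 h ∧ ∀ x ∈ K, ‖h x - u x‖ ≤ ε := by
  borelize E
  obtain ⟨δ, hδ, hδu⟩ := Metric.uniformContinuousOn_iff.1
    ((hK.cthickening (r := 1)).uniformContinuousOn_of_continuous hu.continuousOn) ε hε
  let φ : ContDiffBump (0 : E) := ⟨min δ 1 / 2, min δ 1, by positivity, by
    linarith [lt_min hδ one_pos]⟩
  refine ⟨convolution (φ.normed Measure.addHaar) u (ContinuousLinearMap.lsmul ℝ ℝ) Measure.addHaar,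
    φ.hasCompactSupport_normed.contDiff_convolution_left _ φ.contDiff_normed hu.locallyIntegrable,
    fun x₀ hx₀ => ?_⟩
  rw [← dist_eq_norm]
  refine φ.dist_normed_convolution_le hu.aestronglyMeasurable fun x hx => ?_
  have hx' : dist x x₀ < min δ 1 := mem_ball.1 hx
  exact (hδu x (mem_cthickening_of_dist_le x x₀ 1 K hx₀ (hx'.le.trans (min_le_right _ _))) x₀
    (self_subset_cthickening K hx₀) (hx'.trans_le (min_le_left _ _))).le


section Brouwer

variable {E : Type*} [NormedAddCommGroup E] [InnerProductSpace ℝ E] [FiniteDimensional ℝ E]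
  {r : ℝ}

theorem ContDiff.exists_isFixedPt_of_mapsTo_closedBall {g : E → E} (hg : ContDiff ℝ 1 g)
    (hr : 0 < r) (hmaps : MapsTo g (closedBall 0 r) (closedBall 0 r)) :
    ∃ x ∈ closedBall 0 r, IsFixedPt g x := by
  by_contra! hfix
  have hinner : ∀ x ∈ closedBall (0 : E) r, ‖x‖ = r → 0 < ⟪x, x - g x⟫ := fun x hx hxr =>
    real_inner_sub_pos_of_norm_le (hxr ▸ mem_closedBall_zero_iff.1 (hmaps hx)) (hfix x hx)
  -- push `x` away from `g x` until the sphere is hit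
  set d : E → E := fun x => x - g x
  have hd : ContDiff ℝ 1 d := contDiff_id.sub hg
  set U : Set E := {x | 0 < ⟪x, d x⟫ ^ 2 + (r ^ 2 - ‖x‖ ^ 2) * ‖d x‖ ^ 2} ∩ {x | d x ≠ 0}
  have hU : IsOpen U :=
    (isOpen_lt continuous_const (by fun_prop)).inter (isOpen_ne_fun hd.continuous continuous_const)
  have hDU : closedBall 0 r ⊆ U := fun x hx => by
    have hdx : d x ≠ 0 := sub_ne_zero.2 fun h => hfix x hx h.symm
    refine ⟨?_, hdx⟩
    rcases (mem_closedBall_zero_iff.1 hx).lt_or_eq with hxr | hxr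
    · exact add_pos_of_nonneg_of_pos (sq_nonneg _)
        (mul_pos (by nlinarith [norm_nonneg x]) (pow_pos (norm_pos_iff.2 hdx) 2))
    · show 0 < ⟪x, d x⟫ ^ 2 + (r ^ 2 - ‖x‖ ^ 2) * ‖d x‖ ^ 2
      rw [hxr, sub_self, zero_mul, add_zero]
      exact pow_pos (hinner x hx hxr) 2
  refine not_contDiffOn_of_mapsTo_sphere_of_eqOn (F := fun x => x + sphereExitParam r x (d x) • d x)
    hr hU hDU (fun x hx => ?_) (fun x hx => ?_) ?_
  · exact mem_sphere_zero_iff_norm.2 (norm_add_sphereExitParam_smul hr.le hx.2 hx.1.le)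
  · have hxr := mem_sphere_zero_iff_norm.1 hx
    have h₀ : sphereExitParam r x (d x) = 0 :=
      sphereExitParam_eq_zero hxr (hinner x (sphere_subset_closedBall hx) hxr).le
    simp [h₀]
  · exact contDiffOn_id.add ((contDiffOn_id.sphereExitParam hd.contDiffOn (fun x hx => hx.2)
      fun x hx => hx.1).smul hd.contDiffOn)

theorem exists_contDiff_mapsTo_closedBall_norm_sub_le {g : E → E}
    (hg : ContinuousOn g (closedBall 0 r)) (hmaps : MapsTo g (closedBall 0 r) (closedBall 0 r))
    (hr : 0 < r) {ε : ℝ} (hε : 0 < ε) :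
    ∃ k : E → E, ContDiff ℝ 1 k ∧ MapsTo k (closedBall 0 r) (closedBall 0 r) ∧
      ∀ x ∈ closedBall 0 r, ‖k x - g x‖ ≤ ε := by
  obtain ⟨G, hG⟩ := ContinuousMap.exists_restrict_eq isClosed_closedBall
    ⟨(closedBall (0 : E) r).domRestrict g, hg.domRestrict⟩
  have hGg : ∀ x ∈ closedBall (0 : E) r, G x = g x := fun x hx =>
    congrArg (fun f : C(closedBall (0 : E) r, E) => f ⟨x, hx⟩) hG
  obtain ⟨h, hh, hhG⟩ := exists_contDiff_norm_sub_le G.continuous (isCompact_closedBall 0 r)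
    (half_pos hε)
  -- shrinking `h` by the factor `c` brings it back into the ball
  set c : ℝ := r / (r + ε / 2)
  have hc₀ : 0 ≤ c := by positivity
  have hc₁ : c ≤ 1 := by rw [div_le_one (by positivity)]; linarith
  have hc : c * (r + ε / 2) = r := div_mul_cancel₀ r (by positivity)
  have hh_le : ∀ x ∈ closedBall (0 : E) r, ‖h x - g x‖ ≤ ε / 2 := fun x hx => hGg x hx ▸ hhG x hx
  have hgr : ∀ x ∈ closedBall (0 : E) r, ‖g x‖ ≤ r := fun x hx =>
    mem_closedBall_zero_iff.1 (hmaps hx)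
  refine ⟨fun x => c • h x, hh.const_smul c, fun x hx => ?_, fun x hx => ?_⟩
  · rw [mem_closedBall_zero_iff, norm_smul, Real.norm_of_nonneg hc₀, ← hc]
    refine mul_le_mul_of_nonneg_left ?_ hc₀
    calc ‖h x‖ ≤ ‖h x - g x‖ + ‖g x‖ := norm_le_norm_sub_add _ _
      _ ≤ ε / 2 + r := add_le_add (hh_le x hx) (hgr x hx)
      _ = r + ε / 2 := add_comm _ _
  · have hcr : (1 - c) * r ≤ ε / 2 := by
      have : (1 - c) * (r + ε / 2) = ε / 2 := by linear_combination -hc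
      nlinarith
    calc ‖c • h x - g x‖ = ‖c • (h x - g x) - (1 - c) • g x‖ := by congr 1; module
      _ ≤ c * ‖h x - g x‖ + (1 - c) * ‖g x‖ := by
        refine (norm_sub_le _ _).trans_eq ?_
        rw [norm_smul, norm_smul, Real.norm_of_nonneg hc₀, Real.norm_of_nonneg (sub_nonneg.2 hc₁)]
      _ ≤ ε := by nlinarith [hh_le x hx, hgr x hx, norm_nonneg (h x - g x)]

theorem ContinuousOn.exists_isFixedPt_of_mapsTo_closedBall {g : E → E}
    (hg : ContinuousOn g (closedBall 0 r)) (hr : 0 < r)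
    (hmaps : MapsTo g (closedBall 0 r) (closedBall 0 r)) :
    ∃ x ∈ closedBall 0 r, IsFixedPt g x := by
  by_contra! hfix
  obtain ⟨x₀, hx₀, hmin⟩ := (isCompact_closedBall (0 : E) r).exists_isMinOn
    (nonempty_closedBall.2 hr.le) (hg.sub continuousOn_id).norm
  have hδ : 0 < ‖g x₀ - x₀‖ := norm_pos_iff.2 (sub_ne_zero.2 (hfix x₀ hx₀))
  obtain ⟨k, hk, hkmaps, hkg⟩ :=
    exists_contDiff_mapsTo_closedBall_norm_sub_le hg hmaps hr (half_pos hδ)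
  obtain ⟨x, hx, hkx⟩ := hk.exists_isFixedPt_of_mapsTo_closedBall hr hkmaps
  have hx_le : ‖g x - x‖ ≤ ‖g x₀ - x₀‖ / 2 := by
    simpa only [hkx.eq, norm_sub_rev] using hkg x hx
  have hx_ge : ‖g x₀ - x₀‖ ≤ ‖g x - x‖ := hmin hx
  linarith

theorem not_continuousOn_of_mapsTo_sphere_of_eqOn {ρ : E → E} (hr : 0 < r)
    (hρ : MapsTo ρ (closedBall 0 r) (sphere 0 r)) (hρs : EqOn ρ id (sphere 0 r)) :
    ¬ ContinuousOn ρ (closedBall 0 r) := by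
  intro hρc
  -- a fixed point of `-ρ` would lie on the sphere, where `-ρ` is the antipodal map
  obtain ⟨x, hx, hfix⟩ := hρc.neg.exists_isFixedPt_of_mapsTo_closedBall hr fun x hx =>
    sphere_subset_closedBall (by simpa using hρ hx)
  have hxs : x ∈ sphere (0 : E) r := by
    rw [← hfix.eq]
    simpa using hρ hx
  have h2x : (2 : ℝ) • x = 0 := by
    rw [two_smul]
    nth_rw 1 [← hfix.eq]
    simp [hρs hxs]
  rw [(smul_eq_zero.1 h2x).resolve_left two_ne_zero, mem_sphere_zero_iff_norm, norm_zero] at hxs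
  exact hr.ne hxs

theorem ball_subset_image_closedBall_of_eqOn_sphere {f : E → E}
    (hf : ContinuousOn f (closedBall 0 r)) (hfs : EqOn f id (sphere 0 r)) :
    ball 0 r ⊆ f '' closedBall 0 r := by
  intro y hy
  have hyr := mem_ball_zero_iff.1 hy
  have hr : 0 < r := (norm_nonneg y).trans_lt hyr
  by_contra hmiss
  have he : ∀ x ∈ closedBall (0 : E) r, f x - y ≠ 0 := fun x hx =>
    sub_ne_zero.2 fun h => hmiss ⟨x, hx, h⟩
  -- the ray from `y` through `f x` meets the sphere in a point depending continuously on `x`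
  refine not_continuousOn_of_mapsTo_sphere_of_eqOn
    (ρ := fun x => y + sphereExitParam r y (f x - y) • (f x - y)) hr (fun x hx => ?_)
    (fun x hx => ?_) ?_
  · refine mem_sphere_zero_iff_norm.2 (norm_add_sphereExitParam_smul hr.le (he x hx) ?_)
    have : 0 ≤ r ^ 2 - ‖y‖ ^ 2 := by nlinarith [norm_nonneg y]
    positivity
  · have hfx : f x - y = x - y := by rw [hfs hx, id]
    have h₁ : sphereExitParam r y (f x - y) = 1 := sphereExitParam_eq_one
      (he x (sphere_subset_closedBall hx)) hyr.le (by rw [hfx, add_sub_cancel]; simpa using hx)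
    change y + _ • (f x - y) = x
    rw [h₁, one_smul, hfx, add_sub_cancel]
  · exact continuousOn_const.add ((continuousOn_const.sphereExitParam (hf.sub continuousOn_const)
      he).smul (hf.sub continuousOn_const))

end Brouwer

theorem Submodule.mem_image_add_orthogonal_iff {𝕜 E : Type*} [RCLike 𝕜] [NormedAddCommGroup E]
    [InnerProductSpace 𝕜 E] (K : Submodule 𝕜 E) [K.HasOrthogonalProjection] (u : K) (z : E) :
    z ∈ (fun m => m + (u : E)) '' (Kᗮ : Set E) ↔ K.orthogonalProjectionOnto z = u := by
  constructor
  · rintro ⟨m, hm, rfl⟩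
    rw [map_add, orthogonalProjectionOnto_mem_subspace_eq_self,
      orthogonalProjectionOnto_eq_zero_iff.2 hm, zero_add]
  · intro hz
    refine ⟨z - u, ?_, sub_add_cancel z u⟩
    rw [SetLike.mem_coe, ← orthogonalProjectionOnto_eq_zero_iff, map_sub, hz,
      orthogonalProjectionOnto_mem_subspace_eq_self, sub_self]

theorem homotopical_link_general
    (M : Type*) [NormedAddCommGroup M] [InnerProductSpace ℝ M]
    (M₂ : Submodule ℝ M) [FiniteDimensional ℝ M₂]
    (ϑ : ℝ)
    (B : M ≃L[ℝ] M)
    -- `B₀ = P₂ ∘ B` restricted to `M₂` is invertible, with inverse `B₀inv` of norm `< ϑ`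
    (B₀inv : M₂ →L[ℝ] M₂)
    (hB₀l : ∀ v : M₂, B₀inv (M₂.orthogonalProjectionOnto (B v)) = v)
    (hB₀r : ∀ v : M₂, M₂.orthogonalProjectionOnto (B (B₀inv v)) = v)
    (hB₀norm : ‖B₀inv‖ < ϑ)
    (u₀ : M₂) (hu₀ : ‖u₀‖ = 1)
    (S : Set M) (hS : S = (fun m => m + (u₀ : M)) '' (M₂ᗮ : Set M))
    (Q : Set M) (hQ : Q = {v : M | v ∈ M₂ ∧ ‖v‖ ≤ ϑ})
    (bQ : Set M) (hbQ : bQ = {v : M | v ∈ M₂ ∧ ‖v‖ = ϑ}) :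
    (B '' bQ) ∩ S = ∅ ∧
      ∀ φ : M → M, ContinuousOn φ (B '' Q) → (∀ x ∈ B '' bQ, φ x = x) →
        ((φ '' (B '' Q)) ∩ S).Nonempty := by
  subst hS hQ hbQ
  have hB₀inj : Injective B₀inv := fun a b hab => by rw [← hB₀r a, ← hB₀r b, hab]
  have hB₀u₀ : ‖B₀inv u₀‖ < ϑ := (B₀inv.le_opNorm u₀).trans_lt (by rwa [hu₀, mul_one])
  refine ⟨eq_empty_iff_forall_notMem.2 ?_, fun φ hφ hφfix => ?_⟩
  · rintro _ ⟨⟨v, ⟨hv, hvϑ⟩, rfl⟩, hvS⟩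
    have hv' : B₀inv u₀ = ⟨v, hv⟩ := by
      rw [← (M₂.mem_image_add_orthogonal_iff u₀ _).1 hvS]
      exact hB₀l ⟨v, hv⟩
    exact hB₀u₀.ne (by rw [hv', ← hvϑ]; rfl)
  · let f : M₂ → M₂ := fun w => B₀inv (M₂.orthogonalProjectionOnto (φ (B w)))
    have hBQ : ∀ w ∈ closedBall (0 : M₂) ϑ, B w ∈ B '' {v | v ∈ M₂ ∧ ‖v‖ ≤ ϑ} := fun w hw =>
      ⟨w, ⟨w.2, mem_closedBall_zero_iff.1 hw⟩, rfl⟩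
    have hf : ContinuousOn f (closedBall 0 ϑ) :=
      (B₀inv.continuous.comp M₂.orthogonalProjectionOnto.continuous).comp_continuousOn
        (hφ.comp (B.continuous.comp continuous_subtype_val).continuousOn hBQ)
    have hfs : EqOn f id (sphere 0 ϑ) := fun w hw => by
      simp only [f, hφfix _ ⟨w, ⟨w.2, mem_sphere_zero_iff_norm.1 hw⟩, rfl⟩, hB₀l, id]
    obtain ⟨w, hw, hfw⟩ :=
      ball_subset_image_closedBall_of_eqOn_sphere hf hfs (mem_ball_zero_iff.2 hB₀u₀)
    exact ⟨φ (B w), mem_image_of_mem φ (hBQ w hw),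
      (M₂.mem_image_add_orthogonal_iff u₀ _).2 (hB₀inj hfw)⟩

/-- Lemma 2.3 (homotopical linking part): if `B` is a bounded invertible operator on a
real Hilbert space `M`, `M₂` a nonzero finite-dimensional subspace with orthogonal
projection `P₂`, `B₀ = P₂ ∘ B` invertible on `M₂` with `‖B₀⁻¹‖ < ϑ`, `u₀ ∈ M₂` a unit
vector, `S = M₁ + u₀`, `Q` the closed `ϑ`-ball of `M₂`, then `B(∂Q) ∩ S = ∅` and every
continuous `φ : B(Q) → M` fixing `B(∂Q)` pointwise has image meeting `S`. -/
theorem homotopical_link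
    (M : Type*) [NormedAddCommGroup M] [InnerProductSpace ℝ M] [CompleteSpace M]
    (M₂ : Submodule ℝ M) [FiniteDimensional ℝ M₂] (hM₂ : M₂ ≠ ⊥)
    (ϑ : ℝ) (hϑ : 0 < ϑ)
    (B : M ≃L[ℝ] M)
    -- `B₀ = P₂ ∘ B` restricted to `M₂` is invertible, with inverse `B₀inv` of norm `< ϑ`
    (B₀inv : M₂ →L[ℝ] M₂)
    (hB₀l : ∀ v : M₂, B₀inv (M₂.orthogonalProjectionOnto (B v)) = v)
    (hB₀r : ∀ v : M₂, M₂.orthogonalProjectionOnto (B (B₀inv v)) = v)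
    (hB₀norm : ‖B₀inv‖ < ϑ)
    (u₀ : M₂) (hu₀ : ‖u₀‖ = 1)
    (S : Set M) (hS : S = (fun m => m + (u₀ : M)) '' (M₂ᗮ : Set M))
    (Q : Set M) (hQ : Q = {v : M | v ∈ M₂ ∧ ‖v‖ ≤ ϑ})
    (bQ : Set M) (hbQ : bQ = {v : M | v ∈ M₂ ∧ ‖v‖ = ϑ}) :
    (B '' bQ) ∩ S = ∅ ∧
      ∀ φ : M → M, ContinuousOn φ (B '' Q) → (∀ x ∈ B '' bQ, φ x = x) →
        ((φ '' (B '' Q)) ∩ S).Nonempty :=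
  homotopical_link_general M M₂ ϑ B B₀inv hB₀l hB₀r hB₀norm u₀ hu₀ S hS Q hQ bQ hbQ
end

section
/- Let τ > 0 and s ∈ [1, ∞). Suppose (f_m) is a sequence in L²(ℝ/τℤ, ℂ) whose Fourier coefficients a_j^{(m)} (j ∈ ℤ) satisfy sup_m ( |a₀^{(m)}|² + Σ_{j∈ℤ} |j| |a_j^{(m)}|² ) < ∞. Then (f_m) has a subsequence that converges in the L^s(ℝ/τℤ, ℂ) norm. (Compact embedding part of Lemma 2.1 of the paper: the embedding of W^{1/2,2} of the circle into L^s is compact.) -/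
/-!
Bounded energy `∑ |j| |a_j|² ≤ C` forces the dyadic block `2 ^ n ≤ |j| < 2 ^ (n + 1)` of the
Fourier series to have squared `L²` norm at most `C / 2 ^ n` and, by Cauchy–Schwarz over its
`4 · 2 ^ n` frequencies, sup norm at most `2 √C`. Interpolating, its `Lᵖ` norm is
`O(2 ^ (-n / p))` for every `p ≥ 2`, so the Fourier tails are small in `Lᵖ` uniformly along the
sequence. A Tychonoff argument gives a subsequence whose Fourier coefficients converge pointwise
to those of some `g ∈ L²`; on finitely many frequencies this is `Lᵖ` convergence, and the uniform
tail bound does the rest. On the finite measure space `AddCircle τ`, convergence in `Lᵖ` with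
`p = max 2 s` gives convergence in `Lˢ`.
-/

open MeasureTheory Filter AddCircle Topology
open scoped ENNReal NNReal

noncomputable section

def dyadicWindow (n : ℕ) : Finset ℤ := Finset.Ioo (-2 ^ n) (2 ^ n)

def dyadicShell (n : ℕ) : Finset ℤ := dyadicWindow (n + 1) \ dyadicWindow n

lemma mem_dyadicWindow {n : ℕ} {j : ℤ} : j ∈ dyadicWindow n ↔ |j| < 2 ^ n := by
  simp [dyadicWindow, abs_lt]

lemma dyadicWindow_mono : Monotone dyadicWindow := fun _ _ hab _ hj => by
  rw [mem_dyadicWindow] at hj ⊢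
  exact hj.trans_le (pow_le_pow_right₀ one_le_two hab)

lemma exists_mem_dyadicWindow (j : ℤ) : ∃ n, j ∈ dyadicWindow n :=
  ⟨j.natAbs, mem_dyadicWindow.2 <| by rw [Int.abs_eq_natAbs]; exact_mod_cast Nat.lt_two_pow_self⟩

lemma two_pow_le_abs_of_mem_dyadicShell {n : ℕ} {j : ℤ} (hj : j ∈ dyadicShell n) :
    (2 : ℝ) ^ n ≤ |(j : ℝ)| := by
  have : 2 ^ n ≤ |j| := by simpa [dyadicShell, mem_dyadicWindow] using (Finset.mem_sdiff.1 hj).2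
  exact_mod_cast this

lemma card_dyadicShell_le (n : ℕ) : (dyadicShell n).card ≤ 2 ^ (n + 2) := by
  have hcard : (dyadicWindow (n + 1)).card = (2 ^ (n + 1) - -2 ^ (n + 1) - 1 : ℤ).toNat :=
    Int.card_Ioo _ _
  have : (2 ^ (n + 1) - -2 ^ (n + 1) - 1 : ℤ).toNat ≤ 2 ^ (n + 2) := by
    rw [Int.toNat_le]; push_cast; rw [pow_succ _ (n + 1)]; linarith
  exact (Finset.card_le_card Finset.sdiff_subset).trans (hcard ▸ this)

lemma sum_dyadicWindow_sub_sum_dyadicWindow {M : Type*} [AddCommGroup M] (φ : ℤ → M)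
    {n m : ℕ} (hnm : n ≤ m) :
    ∑ j ∈ dyadicWindow m, φ j - ∑ j ∈ dyadicWindow n, φ j =
      ∑ k ∈ Finset.Ico n m, ∑ j ∈ dyadicShell k, φ j := by
  induction m, hnm using Nat.le_induction with
  | base => simp
  | succ m hnm ih =>
    rw [Finset.sum_Ico_succ_top hnm, ← ih, dyadicShell,
      ← Finset.sum_sdiff (dyadicWindow_mono m.le_succ)]
    abel

/-- The finite-sum form of `∑_j |j| ‖c j‖² ≤ D`, which needs no summability. -/
def HalfSobolevBounded (c : ℤ → ℂ) (D : ℝ) : Prop :=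
  ∀ F : Finset ℤ, ∑ j ∈ F, (|j| : ℝ) * ‖c j‖ ^ 2 ≤ D

namespace HalfSobolevBounded

variable {c b : ℤ → ℂ} {D D' : ℝ}

lemma of_summable (hs : Summable fun j : ℤ => (|j| : ℝ) * ‖c j‖ ^ 2)
    (hD : ‖c 0‖ ^ 2 + ∑' j : ℤ, (|j| : ℝ) * ‖c j‖ ^ 2 ≤ D) : HalfSobolevBounded c D :=
  fun F => (hs.sum_le_tsum F fun j _ => by positivity).trans <|
    le_of_add_le_of_nonneg_right hD (by positivity)

lemma nonneg (hc : HalfSobolevBounded c D) : 0 ≤ D := by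
  simpa using hc ∅

lemma norm_sq_le_of_ne_zero (hc : HalfSobolevBounded c D) {j : ℤ} (hj : j ≠ 0) :
    ‖c j‖ ^ 2 ≤ D := by
  have hj1 : (1 : ℝ) ≤ |(j : ℝ)| := by exact_mod_cast Int.one_le_abs hj
  have := hc {j}
  simp only [Finset.sum_singleton] at this
  nlinarith [sq_nonneg ‖c j‖]

lemma norm_le_sqrt (hc : HalfSobolevBounded c D) (h0 : ‖c 0‖ ^ 2 ≤ D) (j : ℤ) :
    ‖c j‖ ≤ √D := by
  refine Real.le_sqrt_of_sq_le ?_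
  rcases eq_or_ne j 0 with rfl | hj
  · exact h0
  · exact hc.norm_sq_le_of_ne_zero hj

lemma sum_dyadicShell_sq_le (hc : HalfSobolevBounded c D) (n : ℕ) :
    ∑ j ∈ dyadicShell n, ‖c j‖ ^ 2 ≤ D / 2 ^ n := by
  rw [le_div_iff₀ (by positivity), Finset.sum_mul]
  refine (Finset.sum_le_sum fun j hj => ?_).trans (hc _)
  rw [mul_comm]
  exact mul_le_mul_of_nonneg_right (two_pow_le_abs_of_mem_dyadicShell hj) (by positivity)

/-- Cauchy–Schwarz over the `≤ 4 · 2 ^ n` indices of the shell. -/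
lemma sum_dyadicShell_norm_le (hc : HalfSobolevBounded c D) (n : ℕ) :
    ∑ j ∈ dyadicShell n, ‖c j‖ ≤ 2 * √D := by
  have hcs := sq_sum_le_card_mul_sum_sq (s := dyadicShell n) (f := fun j => ‖c j‖)
  have hcard : ((dyadicShell n).card : ℝ) ≤ 2 ^ (n + 2) := by exact_mod_cast card_dyadicShell_le n
  have hsq : (∑ j ∈ dyadicShell n, ‖c j‖) ^ 2 ≤ (2 * √D) ^ 2 := by
    calc (∑ j ∈ dyadicShell n, ‖c j‖) ^ 2
        ≤ 2 ^ (n + 2) * (D / 2 ^ n) :=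
          hcs.trans (mul_le_mul hcard (hc.sum_dyadicShell_sq_le n)
            (Finset.sum_nonneg fun _ _ => by positivity) (by positivity))
      _ = (2 * √D) ^ 2 := by
          rw [mul_pow, Real.sq_sqrt hc.nonneg, pow_add]; field_simp
  exact le_of_pow_le_pow_left₀ two_ne_zero (by positivity) hsq

lemma sub (hc : HalfSobolevBounded c D) (hb : HalfSobolevBounded b D') :
    HalfSobolevBounded (c - b) (2 * D + 2 * D') := by
  intro F
  have hpt : ∀ j ∈ F, (|j| : ℝ) * ‖(c - b) j‖ ^ 2 ≤
      2 * ((|j| : ℝ) * ‖c j‖ ^ 2) + 2 * ((|j| : ℝ) * ‖b j‖ ^ 2) := fun j _ => by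
    have hsq : ‖c j - b j‖ ^ 2 ≤ 2 * (‖c j‖ ^ 2 + ‖b j‖ ^ 2) :=
      (pow_le_pow_left₀ (norm_nonneg _) (norm_sub_le _ _) 2).trans add_sq_le
    simp only [Pi.sub_apply]
    nlinarith [abs_nonneg (j : ℝ)]
  calc _ ≤ _ := Finset.sum_le_sum hpt
    _ ≤ 2 * D + 2 * D' := by
      rw [Finset.sum_add_distrib, ← Finset.mul_sum, ← Finset.mul_sum]
      linarith [hc F, hb F]

lemma of_tendsto {c : ℕ → ℤ → ℂ} (hc : ∀ m, HalfSobolevBounded (c m) D)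
    (hlim : ∀ j, Tendsto (fun m => c m j) atTop (𝓝 (b j))) : HalfSobolevBounded b D :=
  fun F => le_of_tendsto'
    (tendsto_finsetSum F fun j _ => ((hlim j).norm.pow 2).const_mul _) fun m => hc m F

lemma memℓp_two (hc : HalfSobolevBounded c D) : Memℓp c 2 := by
  refine memℓp_gen' (C := D + ‖c 0‖ ^ 2) fun F => ?_
  have hpt : ∀ j ∈ F, ‖c j‖ ^ (2 : ℝ≥0∞).toReal ≤
      (|j| : ℝ) * ‖c j‖ ^ 2 + if j = 0 then ‖c 0‖ ^ 2 else 0 := fun j _ => by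
    rw [ENNReal.toReal_ofNat, Real.rpow_two]
    rcases eq_or_ne j 0 with rfl | hj
    · simp
    · have hj1 : (1 : ℝ) ≤ |(j : ℝ)| := by exact_mod_cast Int.one_le_abs hj
      simp only [hj, if_false, add_zero]
      nlinarith [sq_nonneg ‖c j‖]
  refine (Finset.sum_le_sum hpt).trans ?_
  rw [Finset.sum_add_distrib, Finset.sum_ite_eq']
  gcongr
  · exact hc F
  · split_ifs
    · exact le_rfl
    · positivity

end HalfSobolevBounded

section Interpolation

variable {α E : Type*} [MeasurableSpace α] {μ : Measure α} [NormedAddCommGroup E]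

lemma eLpNorm_rpow_le_of_norm_le {h : α → E} {p : ℝ≥0} (hp : 2 ≤ p) {A : ℝ}
    (hA : ∀ x, ‖h x‖ ≤ A) :
    eLpNorm h p μ ^ (p : ℝ) ≤ ENNReal.ofReal A ^ ((p : ℝ) - 2) * eLpNorm h 2 μ ^ 2 := by
  have hp2 : (2 : ℝ) ≤ p := by exact_mod_cast hp
  have hpt : ∀ x, ‖h x‖ₑ ^ (p : ℝ) ≤ ENNReal.ofReal A ^ ((p : ℝ) - 2) * ‖h x‖ₑ ^ (2 : ℝ) := by
    intro x
    calc ‖h x‖ₑ ^ (p : ℝ) = ‖h x‖ₑ ^ ((p : ℝ) - 2) * ‖h x‖ₑ ^ (2 : ℝ) := by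
          rw [← ENNReal.rpow_add_of_nonneg _ _ (by linarith) zero_le_two, sub_add_cancel]
      _ ≤ ENNReal.ofReal A ^ ((p : ℝ) - 2) * ‖h x‖ₑ ^ (2 : ℝ) := by
          gcongr
          rw [← ofReal_norm]; exact ENNReal.ofReal_le_ofReal (hA x)
  have h2 : eLpNorm h 2 μ ^ 2 = ∫⁻ x, ‖h x‖ₑ ^ (2 : ℝ) ∂μ := by
    simpa using eLpNorm_nnreal_pow_eq_lintegral (μ := μ) (f := h) (p := 2) two_ne_zero
  rw [eLpNorm_nnreal_pow_eq_lintegral (by positivity), h2,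
    ← lintegral_const_mul' _ _ (by finiteness)]
  exact lintegral_mono hpt

end Interpolation

lemma eLpNorm_continuousMap_le_norm {X E : Type*} [TopologicalSpace X] [CompactSpace X]
    [MeasurableSpace X] [NormedAddCommGroup E] {μ : Measure X} [IsProbabilityMeasure μ]
    {p : ℝ≥0∞} (F : C(X, E)) : eLpNorm F p μ ≤ ENNReal.ofReal ‖F‖ := by
  simpa using eLpNorm_le_of_ae_bound (μ := μ) (p := p)
    (ae_of_all _ (ContinuousMap.norm_coe_le_norm F))

lemma tendsto_eLpNorm_smul_measure {α E ι : Type*} [MeasurableSpace α] [NormedAddCommGroup E]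
    {μ : Measure α} {l : Filter ι} {u : ι → α → E} {p c : ℝ≥0∞} (hp : p ≠ ∞) (hc : c ≠ ∞)
    (h : Tendsto (fun i => eLpNorm (u i) p μ) l (𝓝 0)) :
    Tendsto (fun i => eLpNorm (u i) p (c • μ)) l (𝓝 0) := by
  simp_rw [eLpNorm_smul_measure_of_ne_top hp]
  simpa using ENNReal.Tendsto.const_mul h
    (Or.inr (ENNReal.rpow_ne_top_of_nonneg (inv_nonneg.2 ENNReal.toReal_nonneg) hc))

lemma exists_subseq_tendsto_of_norm_le {ι E : Type*} [Countable ι] [NormedAddCommGroup E]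
    [ProperSpace E] (c : ℕ → ι → E) {R : ℝ} (hc : ∀ m i, ‖c m i‖ ≤ R) :
    ∃ b : ι → E, ∃ ψ : ℕ → ℕ, StrictMono ψ ∧
      ∀ i, Tendsto (fun m => c (ψ m) i) atTop (𝓝 (b i)) := by
  obtain ⟨b, -, ψ, hψ, hlim⟩ :=
    (isCompact_univ_pi fun _ : ι => isCompact_closedBall (0 : E) R).tendsto_subseq
      (x := c) fun m => Set.mem_univ_pi.2 fun i => by simpa using hc m i
  exact ⟨b, ψ, hψ, tendsto_pi_nhds.1 hlim⟩

section Circle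

variable {T : ℝ} [Fact (0 < T)]

lemma norm_sum_smul_fourier_le (c : ℤ → ℂ) (F : Finset ℤ) :
    ‖∑ j ∈ F, c j • fourier (T := T) j‖ ≤ ∑ j ∈ F, ‖c j‖ :=
  (norm_sum_le _ _).trans_eq <| Finset.sum_congr rfl fun j _ => by
    rw [norm_smul, fourier_norm, mul_one]

lemma toLp_sum_smul_fourier (c : ℤ → ℂ) (F : Finset ℤ) :
    ContinuousMap.toLp 2 haarAddCircle ℂ (∑ j ∈ F, c j • fourier (T := T) j) =
      ∑ j ∈ F, c j • fourierLp 2 j := by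
  simp [fourierLp]

lemma eLpNorm_sum_smul_fourier_sq (c : ℤ → ℂ) (F : Finset ℤ) :
    eLpNorm ⇑(∑ j ∈ F, c j • fourier (T := T) j) 2 haarAddCircle ^ 2 =
      ENNReal.ofReal (∑ j ∈ F, ‖c j‖ ^ 2) := by
  have hnorm : ‖∑ j ∈ F, c j • fourierLp (T := T) 2 j‖ ^ 2 = ∑ j ∈ F, ‖c j‖ ^ 2 := by
    simpa using (orthonormal_fourier (T := T)).orthogonalFamily.norm_sum c F
  rw [← eLpNorm_congr_ae (ContinuousMap.coeFn_toLp (p := 2) (𝕜 := ℂ) haarAddCircle _),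
    ← Lp.enorm_def, toLp_sum_smul_fourier, ← ofReal_norm, ← ENNReal.ofReal_pow (norm_nonneg _),
    hnorm]

lemma fourierCoeff.sub {E : Type*} [NormedAddCommGroup E] [NormedSpace ℂ E]
    {f g : AddCircle T → E} (hf : Integrable f haarAddCircle) (hg : Integrable g haarAddCircle) :
    fourierCoeff (f - g) = fourierCoeff f - fourierCoeff g := by
  ext n
  simp only [fourierCoeff, Pi.sub_apply, smul_sub]
  exact integral_sub (hf.fourier_smul _) (hg.fourier_smul _)

lemma exists_memLp_fourierCoeff_eq {b : ℤ → ℂ} (hb : Memℓp b 2) :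
    ∃ g : AddCircle T → ℂ, MemLp g 2 haarAddCircle ∧ fourierCoeff g = b := by
  refine ⟨fourierBasis.repr.symm ⟨b, hb⟩, Lp.memLp _, funext fun j => ?_⟩
  rw [← fourierBasis_repr, LinearIsometryEquiv.apply_symm_apply]

def dyadicFourierSum (c : ℤ → ℂ) (n : ℕ) : C(AddCircle T, ℂ) :=
  ∑ j ∈ dyadicWindow n, c j • fourier j

/-- Interpolating the sup bound `2 √D` and the `L²` bound `D / 2 ^ n` of a shell. -/
lemma exists_geometric_bound_eLpNorm_dyadicShell {p : ℝ≥0} (hp : 2 ≤ p) (D : ℝ) :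
    ∃ K θ : ℝ≥0∞, K ≠ ∞ ∧ θ < 1 ∧ ∀ c : ℤ → ℂ, HalfSobolevBounded c D → ∀ n,
      eLpNorm ⇑(∑ j ∈ dyadicShell n, c j • fourier (T := T) j) p haarAddCircle ≤ K * θ ^ n := by
  have hp2 : (2 : ℝ) ≤ p := by exact_mod_cast hp
  have hp0 : (0 : ℝ) < p := by linarith
  set M := ENNReal.ofReal (2 * √D) ^ ((p : ℝ) - 2) * ENNReal.ofReal D
  have hM : M ≠ ∞ := ENNReal.mul_ne_top
    (ENNReal.rpow_ne_top_of_nonneg (sub_nonneg.2 hp2) ENNReal.ofReal_ne_top) ENNReal.ofReal_ne_top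
  refine ⟨M ^ (p : ℝ)⁻¹, 2⁻¹ ^ (p : ℝ)⁻¹, ENNReal.rpow_ne_top_of_nonneg (by positivity) hM,
    ENNReal.rpow_lt_one (by norm_num) (by positivity), fun c hc n => ?_⟩
  have hinterp := eLpNorm_rpow_le_of_norm_le (μ := haarAddCircle (T := T)) hp fun x =>
    ((ContinuousMap.norm_coe_le_norm _ x).trans (norm_sum_smul_fourier_le c _)).trans
      (hc.sum_dyadicShell_norm_le n)
  rw [eLpNorm_sum_smul_fourier_sq] at hinterp
  have hshell : ENNReal.ofReal (∑ j ∈ dyadicShell n, ‖c j‖ ^ 2) ≤ ENNReal.ofReal D * 2⁻¹ ^ n := by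
    rw [← ENNReal.ofReal_ofNat 2, ← ENNReal.ofReal_inv_of_pos two_pos,
      ← ENNReal.ofReal_pow (by norm_num), ← ENNReal.ofReal_mul hc.nonneg, inv_pow,
      ← div_eq_mul_inv]
    exact ENNReal.ofReal_le_ofReal (hc.sum_dyadicShell_sq_le n)
  have hpow : eLpNorm ⇑(∑ j ∈ dyadicShell n, c j • fourier (T := T) j) p haarAddCircle ^ (p : ℝ)
      ≤ M * 2⁻¹ ^ n :=
    hinterp.trans (by rw [mul_assoc]; gcongr)
  rwa [← ENNReal.le_rpow_inv_iff hp0, ENNReal.mul_rpow_of_nonneg _ _ (by positivity),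
    ← ENNReal.rpow_natCast, ← ENNReal.rpow_mul, mul_comm (n : ℝ), ENNReal.rpow_mul,
    ENNReal.rpow_natCast] at hpow

lemma exists_tendsto_zero_eLpNorm_dyadicFourierSum_sub {p : ℝ≥0} (hp : 2 ≤ p) (D : ℝ) :
    ∃ ε : ℕ → ℝ≥0∞, Tendsto ε atTop (𝓝 0) ∧ ∀ c : ℤ → ℂ, HalfSobolevBounded c D →
      ∀ n m, n ≤ m → eLpNorm ⇑(dyadicFourierSum c m - dyadicFourierSum c n : C(AddCircle T, ℂ))
        p haarAddCircle ≤ ε n := by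
  obtain ⟨K, θ, hK, hθ, hshell⟩ := exists_geometric_bound_eLpNorm_dyadicShell (T := T) hp D
  refine ⟨fun n => ∑' k, K * θ ^ (k + n), ENNReal.tendsto_sum_nat_add (fun k => K * θ ^ k) ?_,
    fun c hc n m hnm => ?_⟩
  · rw [ENNReal.tsum_mul_left, ENNReal.tsum_geometric]
    exact ENNReal.mul_ne_top hK (ENNReal.inv_ne_top.2 (tsub_pos_of_lt hθ).ne')
  have hp1 : (1 : ℝ≥0∞) ≤ p := by exact_mod_cast one_le_two.trans hp
  rw [dyadicFourierSum, dyadicFourierSum, sum_dyadicWindow_sub_sum_dyadicWindow _ hnm,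
    ContinuousMap.coe_sum]
  calc eLpNorm (∑ k ∈ Finset.Ico n m, ⇑(∑ j ∈ dyadicShell k, c j • fourier (T := T) j)) p
        haarAddCircle
      ≤ ∑ k ∈ Finset.Ico n m, K * θ ^ k :=
        (eLpNorm_sum_le (fun k _ => (ContinuousMap.continuous _).aestronglyMeasurable) hp1).trans
          (Finset.sum_le_sum fun k _ => hshell c hc k)
    _ = ∑ k ∈ Finset.range (m - n), K * θ ^ (k + n) := by
        rw [Finset.sum_Ico_eq_sum_range]; simp_rw [add_comm n]
    _ ≤ ∑' k, K * θ ^ (k + n) := ENNReal.sum_le_tsum _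

lemma exists_subseq_ae_tendsto_dyadicFourierSum {h : AddCircle T → ℂ}
    (hh : MemLp h 2 haarAddCircle) :
    ∃ ψ : ℕ → ℕ, StrictMono ψ ∧ ∀ᵐ x ∂haarAddCircle,
      Tendsto (fun m => dyadicFourierSum (fourierCoeff h) (ψ m) x) atTop (𝓝 (h x)) := by
  have hsum := hasSum_fourier_series_L2 (hh.toLp h)
  rw [fourierCoeff_congr_ae hh.coeFn_toLp] at hsum
  have hLp : Tendsto (fun n => ContinuousMap.toLp 2 haarAddCircle ℂ
      (dyadicFourierSum (fourierCoeff h) n)) atTop (𝓝 (hh.toLp h)) := by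
    simpa only [dyadicFourierSum, toLp_sum_smul_fourier, Function.comp_def] using
      hsum.comp (tendsto_atTop_finset_of_monotone dyadicWindow_mono exists_mem_dyadicWindow)
  obtain ⟨ψ, hψ, hae⟩ := (tendstoInMeasure_of_tendsto_Lp hLp).exists_seq_tendsto_ae
  refine ⟨ψ, hψ, ?_⟩
  have hcoe := ae_all_iff.2 fun n =>
    ContinuousMap.coeFn_toLp (p := 2) (𝕜 := ℂ) (haarAddCircle (T := T))
      (dyadicFourierSum (fourierCoeff h) n)
  filter_upwards [hae, hcoe, hh.coeFn_toLp] with x hx hxn hxh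
  rw [← hxh]
  exact hx.congr fun m => hxn (ψ m)

lemma exists_tendsto_zero_eLpNorm_sub_dyadicFourierSum {p : ℝ≥0} (hp : 2 ≤ p) (D : ℝ) :
    ∃ ε : ℕ → ℝ≥0∞, Tendsto ε atTop (𝓝 0) ∧ ∀ h : AddCircle T → ℂ, MemLp h 2 haarAddCircle →
      HalfSobolevBounded (fourierCoeff h) D →
        ∀ n, eLpNorm (h - ⇑(dyadicFourierSum (fourierCoeff h) n)) p haarAddCircle ≤ ε n := by
  obtain ⟨ε, hε, hcauchy⟩ := exists_tendsto_zero_eLpNorm_dyadicFourierSum_sub (T := T) hp D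
  refine ⟨ε, hε, fun h hh hD n => ?_⟩
  obtain ⟨ψ, hψ, hae⟩ := exists_subseq_ae_tendsto_dyadicFourierSum hh
  refine Lp.eLpNorm_le_of_ae_tendsto ((eventually_ge_atTop n).mono fun m hm =>
    hcauchy _ hD n (ψ m) (hm.trans (hψ.id_le m)))
    (fun m => (ContinuousMap.continuous _).aestronglyMeasurable) ?_
  filter_upwards [hae] with x hx
  simpa using hx.sub_const (dyadicFourierSum (fourierCoeff h) n x)

lemma memLp_of_halfSobolevBounded {p : ℝ≥0} (hp : 2 ≤ p) {D : ℝ} {h : AddCircle T → ℂ}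
    (hh : MemLp h 2 haarAddCircle) (hD : HalfSobolevBounded (fourierCoeff h) D) :
    MemLp h p haarAddCircle := by
  obtain ⟨ε, hε, htail⟩ := exists_tendsto_zero_eLpNorm_sub_dyadicFourierSum (T := T) hp D
  obtain ⟨n, hn⟩ := (hε.eventually (gt_mem_nhds ENNReal.zero_lt_top)).exists
  set S := dyadicFourierSum (fourierCoeff h) n
  have hrest : MemLp (h - ⇑S) p haarAddCircle :=
    ⟨hh.aestronglyMeasurable.sub S.continuous.aestronglyMeasurable,
      (htail h hh hD n).trans_lt hn⟩
  have hS : MemLp S p haarAddCircle :=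
    ⟨S.continuous.aestronglyMeasurable,
      (eLpNorm_continuousMap_le_norm S).trans_lt ENNReal.ofReal_lt_top⟩
  simpa using hrest.add hS

lemma tendsto_eLpNorm_zero_of_tendsto_fourierCoeff_zero {p : ℝ≥0} (hp : 2 ≤ p) {D : ℝ}
    {h : ℕ → AddCircle T → ℂ} (hL2 : ∀ m, MemLp (h m) 2 haarAddCircle)
    (hD : ∀ m, HalfSobolevBounded (fourierCoeff (h m)) D)
    (hcoeff : ∀ j, Tendsto (fun m => fourierCoeff (h m) j) atTop (𝓝 0)) :
    Tendsto (fun m => eLpNorm (h m) p haarAddCircle) atTop (𝓝 0) := by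
  obtain ⟨ε, hε, htail⟩ := exists_tendsto_zero_eLpNorm_sub_dyadicFourierSum (T := T) hp D
  have hhead : ∀ n, Tendsto (fun m => eLpNorm
      ⇑(dyadicFourierSum (T := T) (fourierCoeff (h m)) n) p haarAddCircle) atTop (𝓝 0) := by
    intro n
    have hsum : Tendsto (fun m => ∑ j ∈ dyadicWindow n, ‖fourierCoeff (h m) j‖) atTop (𝓝 0) := by
      simpa using tendsto_finsetSum _ fun j _ => (hcoeff j).norm
    refine tendsto_of_tendsto_of_tendsto_of_le_of_le tendsto_const_nhds
      (by simpa using ENNReal.tendsto_ofReal hsum) (fun _ => zero_le) fun m =>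
        (eLpNorm_continuousMap_le_norm _).trans
          (ENNReal.ofReal_le_ofReal (norm_sum_smul_fourier_le _ _))
  have hp1 : (1 : ℝ≥0∞) ≤ p := by exact_mod_cast one_le_two.trans hp
  rw [ENNReal.tendsto_nhds_zero]
  intro δ hδ
  obtain ⟨n, hn⟩ := (ENNReal.tendsto_nhds_zero.1 hε (δ / 2) (ENNReal.half_pos hδ.ne')).exists
  filter_upwards [ENNReal.tendsto_nhds_zero.1 (hhead n) (δ / 2) (ENNReal.half_pos hδ.ne')]
    with m hm
  set S := dyadicFourierSum (fourierCoeff (h m)) n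
  calc eLpNorm (h m) p haarAddCircle = eLpNorm ((h m - ⇑S) + ⇑S) p haarAddCircle := by
        rw [sub_add_cancel]
    _ ≤ eLpNorm (h m - ⇑S) p haarAddCircle + eLpNorm S p haarAddCircle :=
        eLpNorm_add_le ((hL2 m).aestronglyMeasurable.sub S.continuous.aestronglyMeasurable)
          S.continuous.aestronglyMeasurable hp1
    _ ≤ δ / 2 + δ / 2 := add_le_add ((htail _ (hL2 m) (hD m) n).trans hn) hm
    _ = δ := ENNReal.add_halves δ

end Circle

theorem halfSobolev_compact_embedding_general
    (τ : ℝ) [hτ : Fact (0 < τ)] (s : ℝ)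
    (f : ℕ → AddCircle τ → ℂ)
    (hL2 : ∀ m, MemLp (f m) 2 volume)
    (hsummable : ∀ m, Summable (fun j : ℤ => (|j| : ℝ) * ‖fourierCoeff (f m) j‖ ^ 2))
    (hbdd : ∃ C : ℝ, ∀ m, ‖fourierCoeff (f m) 0‖ ^ 2 +
      ∑' j : ℤ, (|j| : ℝ) * ‖fourierCoeff (f m) j‖ ^ 2 ≤ C) :
    ∃ (g : AddCircle τ → ℂ) (ψ : ℕ → ℕ), StrictMono ψ ∧
      MemLp g (ENNReal.ofReal s) volume ∧
      Tendsto (fun m => eLpNorm (f (ψ m) - g) (ENNReal.ofReal s) volume)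
        atTop (nhds 0) := by
  obtain ⟨C, hC⟩ := hbdd
  have hfC m : HalfSobolevBounded (fourierCoeff (f m)) C := .of_summable (hsummable m) (hC m)
  have hf0 m : ‖fourierCoeff (f m) 0‖ ^ 2 ≤ C :=
    le_of_add_le_of_nonneg_left (hC m) (tsum_nonneg fun j => by positivity)
  obtain ⟨b, ψ, hψ, hlim⟩ := exists_subseq_tendsto_of_norm_le (fun m => fourierCoeff (f m))
    fun m j => (hfC m).norm_le_sqrt (hf0 m) j
  have hbC : HalfSobolevBounded b C := .of_tendsto (fun m => hfC (ψ m)) hlim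
  obtain ⟨g, hg, rfl⟩ := exists_memLp_fourierCoeff_eq (T := τ) hbC.memℓp_two
  have hfL2 m : MemLp (f m) 2 haarAddCircle := (hL2 m).haarAddCircle
  have hcoeff m : fourierCoeff (f m - g) = fourierCoeff (f m) - fourierCoeff g :=
    fourierCoeff.sub ((hfL2 m).integrable one_le_two) (hg.integrable one_le_two)
  set p : ℝ≥0 := max 2 s.toNNReal
  have hsp : ENNReal.ofReal s ≤ p := ENNReal.coe_le_coe.2 (le_max_right _ _)
  have hconv : Tendsto (fun m => eLpNorm (f (ψ m) - g) p haarAddCircle) atTop (𝓝 0) :=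
    tendsto_eLpNorm_zero_of_tendsto_fourierCoeff_zero (le_max_left _ _)
      (fun m => (hfL2 _).sub hg) (fun m => hcoeff (ψ m) ▸ (hfC _).sub hbC)
      fun j => by simpa [hcoeff] using (hlim j).sub_const (fourierCoeff g j)
  refine ⟨g, ψ, hψ, ((memLp_of_halfSobolevBounded (le_max_left _ _) hg hbC).mono_exponent
    hsp).of_haarAddCircle, ?_⟩
  rw [volume_eq_smul_haarAddCircle]
  exact tendsto_eLpNorm_smul_measure ENNReal.ofReal_ne_top ENNReal.ofReal_ne_top <|
    tendsto_of_tendsto_of_tendsto_of_le_of_le tendsto_const_nhds hconv (fun _ => zero_le)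
      fun m => eLpNorm_le_eLpNorm_of_exponent_le hsp ((hfL2 _).sub hg).aestronglyMeasurable

/-- Compact embedding part of Lemma 2.1: a sequence in `L²` of the circle of
circumference `τ` whose `W^{1/2,2}`-norms `(|a₀^{(m)}|² + Σ_j |j| |a_j^{(m)}|²)^{1/2}`
are uniformly bounded has a subsequence converging in the `L^s` norm, `1 ≤ s < ∞`. -/
theorem halfSobolev_compact_embedding
    (τ : ℝ) [hτ : Fact (0 < τ)] (s : ℝ) (hs : 1 ≤ s)
    (f : ℕ → AddCircle τ → ℂ)
    (hL2 : ∀ m, MemLp (f m) 2 volume)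
    (hsummable : ∀ m, Summable (fun j : ℤ => (|j| : ℝ) * ‖fourierCoeff (f m) j‖ ^ 2))
    (hbdd : ∃ C : ℝ, ∀ m, ‖fourierCoeff (f m) 0‖ ^ 2 +
      ∑' j : ℤ, (|j| : ℝ) * ‖fourierCoeff (f m) j‖ ^ 2 ≤ C) :
    ∃ (g : AddCircle τ → ℂ) (ψ : ℕ → ℕ), StrictMono ψ ∧
      MemLp g (ENNReal.ofReal s) volume ∧
      Tendsto (fun m => eLpNorm (f (ψ m) - g) (ENNReal.ofReal s) volume)
        atTop (nhds 0) :=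
  halfSobolev_compact_embedding_general τ (hτ := hτ) s f hL2 hsummable hbdd
end
end
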